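/- For every integer N ≥ 1 and every m ∈ ℝ, ∫_m^∞ ( ∑_{n=0}^{N−1} φ_n(x)² ) dx = √(2N) ∫_0^∞ z φ_N(m+z) φ_{N−1}(m+z) dz. -/

import Mathlib

/-!
The sum `K = ∑_{n<N} φₙ²` has derivative `-√(2N) φ_N φ_{N-1}`: with the ladder relations
`φₙ' = √(2n) φₙ₋₁ - x φₙ` and `√(2(n+1)) φₙ₊₁ = 2x φₙ - √(2n) φₙ₋₁`, the derivatives of the
`φₙ²` telescope. Integrating by parts against `x - m` on `(m, ∞)`, where the boundary terms vanish
because everything decays like a polynomial times `exp (-x²/2)`, gives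
`∫_m^∞ K = -∫_m^∞ (x - m) K'(x) dx`, and the substitution `x = m + z` is the claim.
-/

open Real MeasureTheory

/-- Physicists' Hermite polynomials: H₀ = 1, H₁ = 2x, H_{n+2} = 2x H_{n+1} − 2(n+1) H_n. -/
noncomputable def physHermite : ℕ → ℝ → ℝ
  | 0, _ => 1
  | 1, x => 2 * x
  | n + 2, x => 2 * x * physHermite (n + 1) x - 2 * ((n : ℝ) + 1) * physHermite n x

/-- The n-th Hermite function (harmonic oscillator wave function)
φₙ(x) = (2ⁿ n! √π)^{−1/2} Hₙ(x) e^{−x²/2}. -/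
noncomputable def hermiteFn (n : ℕ) (x : ℝ) : ℝ :=
  ((2 : ℝ) ^ n * Nat.factorial n * Real.sqrt Real.pi) ^ (-(1 : ℝ) / 2) *
    physHermite n x * Real.exp (-x ^ 2 / 2)

open Filter Asymptotics Set Topology

section GaussianDecay

def HasGaussianDecay (f : ℝ → ℝ) : Prop :=
  ∃ M : ℕ, f =O[⊤] fun x => (1 + x ^ 2) ^ M * exp (-x ^ 2 / 2)

lemma one_add_sq_pow_isBigO_top_of_le {a b : ℕ} (h : a ≤ b) :
    (fun x : ℝ => (1 + x ^ 2) ^ a) =O[⊤] fun x => (1 + x ^ 2) ^ b := by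
  refine isBigO_of_le _ fun x => ?_
  have hx : 1 ≤ 1 + x ^ 2 := le_add_of_nonneg_right (sq_nonneg x)
  simp only [norm_pow, Real.norm_of_nonneg (zero_le_one.trans hx)]
  exact pow_le_pow_right₀ hx h

lemma id_isBigO_top_one_add_sq : (fun x : ℝ => x) =O[⊤] fun x => 1 + x ^ 2 :=
  isBigO_of_le _ fun x => by
    rw [norm_eq_abs, norm_of_nonneg (by positivity)]
    nlinarith [sq_abs x, sq_nonneg (|x| - 1)]

lemma const_isBigO_top_one_add_sq (c : ℝ) : (fun _ : ℝ => c) =O[⊤] fun x => 1 + x ^ 2 :=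
  isBigO_of_le' (c := ‖c‖) _ fun x => by
    rw [norm_of_nonneg (by positivity : (0 : ℝ) ≤ 1 + x ^ 2)]
    nlinarith [norm_nonneg c, sq_nonneg x]

/-- From `y ^ M ≤ M! e ^ y` at `y = (1 + x²) / 4`. -/
lemma one_add_sq_pow_mul_exp_isBigO_top (M : ℕ) :
    (fun x : ℝ => (1 + x ^ 2) ^ M * exp (-x ^ 2 / 2)) =O[⊤] fun x => exp (-(1 / 4) * x ^ 2) := by
  refine isBigO_of_le' (c := 4 ^ M * M.factorial * exp (1 / 4)) _ fun x => ?_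
  have hpow := pow_div_factorial_le_exp (x := (1 + x ^ 2) / 4) (by positivity) M
  rw [div_le_iff₀ (by positivity), div_pow] at hpow
  rw [norm_of_nonneg (by positivity), norm_of_nonneg (by positivity)]
  calc (1 + x ^ 2) ^ M * exp (-x ^ 2 / 2)
      = 4 ^ M * ((1 + x ^ 2) ^ M / 4 ^ M) * exp (-x ^ 2 / 2) := by field_simp
    _ ≤ 4 ^ M * (exp ((1 + x ^ 2) / 4) * M.factorial) * exp (-x ^ 2 / 2) := by gcongr
    _ = 4 ^ M * M.factorial * exp (1 / 4) * exp (-(1 / 4) * x ^ 2) := by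
      rw [mul_comm (exp _), mul_assoc, mul_assoc, ← exp_add, mul_assoc, ← exp_add]
      ring_nf

variable {f g : ℝ → ℝ}

lemma HasGaussianDecay.integrable (hf : HasGaussianDecay f) (hfm : AEStronglyMeasurable f) :
    Integrable f := by
  obtain ⟨M, hM⟩ := hf
  exact (hM.trans (one_add_sq_pow_mul_exp_isBigO_top M)).integrable hfm
    (integrable_exp_neg_mul_sq (by norm_num))

lemma HasGaussianDecay.tendsto_atTop (hf : HasGaussianDecay f) : Tendsto f atTop (𝓝 0) := by
  obtain ⟨M, hM⟩ := hf
  refine ((hM.trans (one_add_sq_pow_mul_exp_isBigO_top M)).mono le_top).trans_tendsto ?_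
  exact tendsto_exp_atBot.comp <|
    (tendsto_pow_atTop two_ne_zero).const_mul_atTop_of_neg (by norm_num)

lemma HasGaussianDecay.of_isBigO_mul {k : ℕ} (hg : g =O[⊤] fun x => (1 + x ^ 2) ^ k)
    (hf : HasGaussianDecay f) : HasGaussianDecay fun x => g x * f x := by
  obtain ⟨M, hM⟩ := hf
  exact ⟨k + M, (hg.mul hM).congr_right fun x => by ring⟩

lemma HasGaussianDecay.mul (hf : HasGaussianDecay f) (hg : HasGaussianDecay g) :
    HasGaussianDecay fun x => f x * g x := by
  obtain ⟨M, hM⟩ := hf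
  obtain ⟨K, hK⟩ := hg
  refine ⟨M + K, (hM.mul hK).trans_le fun x => ?_⟩
  have h1 : exp (-x ^ 2 / 2) ≤ 1 := exp_le_one_iff.mpr (by nlinarith [sq_nonneg x])
  rw [norm_of_nonneg (by positivity), norm_of_nonneg (by positivity), pow_add]
  calc (1 + x ^ 2) ^ M * exp (-x ^ 2 / 2) * ((1 + x ^ 2) ^ K * exp (-x ^ 2 / 2))
      = (1 + x ^ 2) ^ M * (1 + x ^ 2) ^ K * exp (-x ^ 2 / 2) * exp (-x ^ 2 / 2) := by ring
    _ ≤ (1 + x ^ 2) ^ M * (1 + x ^ 2) ^ K * exp (-x ^ 2 / 2) * 1 := by gcongr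
    _ = _ := mul_one _

lemma HasGaussianDecay.const_mul (hf : HasGaussianDecay f) (c : ℝ) :
    HasGaussianDecay fun x => c * f x := by
  obtain ⟨M, hM⟩ := hf
  exact ⟨M, hM.const_mul_left c⟩

lemma HasGaussianDecay.sub_const_mul (hf : HasGaussianDecay f) (m : ℝ) :
    HasGaussianDecay fun x => (x - m) * f x :=
  hf.of_isBigO_mul (k := 1) <|
    (id_isBigO_top_one_add_sq.sub (const_isBigO_top_one_add_sq m)).congr_right
      fun _ => (pow_one _).symm

lemma HasGaussianDecay.sum {ι : Type*} {s : Finset ι} {f : ι → ℝ → ℝ}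
    (hf : ∀ i ∈ s, HasGaussianDecay (f i)) : HasGaussianDecay fun x => ∑ i ∈ s, f i x := by
  choose! M hM using hf
  exact ⟨s.sup M, IsBigO.fun_sum fun i hi =>
    (hM i hi).trans ((one_add_sq_pow_isBigO_top_of_le (Finset.le_sup hi)).mul (isBigO_refl _ _))⟩

end GaussianDecay

lemma integral_Ioi_eq_neg_integral_Ioi_sub_const_mul_deriv {v v' : ℝ → ℝ} (m : ℝ)
    (hv : ∀ x, HasDerivAt v (v' x) x) (hvd : HasGaussianDecay v) (hv'd : HasGaussianDecay v') :
    ∫ x in Ioi m, v x = -∫ x in Ioi m, (x - m) * v' x := by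
  have hvc : Continuous v := continuous_iff_continuousAt.mpr fun x => (hv x).continuousAt
  have hv'm : Measurable v' := by
    simpa only [funext fun x => (hv x).deriv] using measurable_deriv v
  have hu : Continuous fun x : ℝ => x - m := continuous_id.sub continuous_const
  have hibp := integral_Ioi_mul_deriv_eq_deriv_mul (u := fun x => x - m) (u' := fun _ => 1)
    (fun x _ => (hasDerivAt_id x).sub_const m) (fun x _ => hv x)
    ((hv'd.sub_const_mul m).integrable
      (hu.aestronglyMeasurable.mul hv'm.aestronglyMeasurable)).integrableOn
    (by simpa only [Pi.mul_def, one_mul] using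
      (hvd.integrable hvc.aestronglyMeasurable).integrableOn)
    (by simpa using ((hu.mul hvc).tendsto m).mono_left nhdsWithin_le_nhds)
    (hvd.sub_const_mul m).tendsto_atTop
  simp only [one_mul, neg_zero, zero_sub] at hibp
  rw [hibp, neg_neg]

lemma integral_Ioi_eq_integral_Ioi_zero_comp_add {E : Type*} [NormedAddCommGroup E]
    [NormedSpace ℝ E] (f : ℝ → E) (m : ℝ) :
    ∫ x in Ioi m, f x = ∫ z in Ioi 0, f (m + z) := by
  have hpre : (fun z : ℝ => m + z) ⁻¹' Ioi m = Ioi 0 := by ext z; simp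
  rw [← hpre]
  exact ((measurePreserving_add_left volume m).setIntegral_preimage_emb
    (MeasurableEquiv.addLeft m).measurableEmbedding f (Ioi m)).symm

lemma physHermite_succ (n : ℕ) (x : ℝ) :
    physHermite (n + 1) x = 2 * x * physHermite n x - 2 * n * physHermite (n - 1) x := by
  cases n with
  | zero => simp [physHermite]
  | succ n => rw [physHermite]; push_cast; ring

lemma hasDerivAt_physHermite (n : ℕ) (x : ℝ) :
    HasDerivAt (physHermite n) (2 * n * physHermite (n - 1) x) x := by
  induction n using Nat.twoStepInduction generalizing x with
  | zero => simpa [physHermite] using hasDerivAt_const x (1 : ℝ)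
  | one => simpa [physHermite] using (hasDerivAt_id x).const_mul (2 : ℝ)
  | more n ih₀ ih₁ =>
    refine ((((hasDerivAt_id' x).const_mul 2).fun_mul (ih₁ x)).fun_sub
      ((ih₀ x).const_mul (2 * ((n : ℝ) + 1)))).congr_deriv ?_
    rw [Nat.add_sub_cancel, show n + 2 - 1 = n + 1 by omega]
    push_cast
    linear_combination (-2 * ((n : ℝ) + 1)) * physHermite_succ n x

lemma physHermite_isBigO_top (n : ℕ) :
    physHermite n =O[⊤] fun x => (1 + x ^ 2) ^ n := by
  induction n using Nat.twoStepInduction with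
  | zero => exact (isBigO_refl _ _).congr (fun _ => rfl) fun _ => rfl
  | one =>
    exact (id_isBigO_top_one_add_sq.const_mul_left 2).congr (fun _ => rfl)
      fun _ => (pow_one _).symm
  | more n ih₀ ih₁ =>
    have h₂ := (((id_isBigO_top_one_add_sq.const_mul_left 2).mul ih₁).congr_right
      fun _ => (pow_succ' _ _).symm).sub
      ((ih₀.trans (one_add_sq_pow_isBigO_top_of_le (by omega : n ≤ n + 2))).const_mul_left
        (2 * ((n : ℝ) + 1)))
    exact h₂.congr (fun _ => rfl) fun _ => by ring

noncomputable def hermiteNorm (n : ℕ) : ℝ :=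
  ((2 : ℝ) ^ n * n.factorial * √π) ^ (-(1 : ℝ) / 2)

lemma hermiteFn_eq (n : ℕ) (x : ℝ) :
    hermiteFn n x = hermiteNorm n * physHermite n x * exp (-x ^ 2 / 2) := rfl

lemma hermiteNorm_succ_mul_sqrt (n : ℕ) :
    hermiteNorm (n + 1) * √(2 * ((n : ℝ) + 1)) = hermiteNorm n := by
  have hA : (0 : ℝ) < 2 ^ n * n.factorial * √π := by have := sqrt_pos.mpr pi_pos; positivity
  have hB : (0 : ℝ) < 2 * ((n : ℝ) + 1) := by positivity
  have hsplit : (2 : ℝ) ^ (n + 1) * (n + 1).factorial * √π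
      = (2 ^ n * n.factorial * √π) * (2 * ((n : ℝ) + 1)) := by
    rw [Nat.factorial_succ]; push_cast; ring
  rw [hermiteNorm, hermiteNorm, hsplit, mul_rpow hA.le hB.le, mul_assoc,
    sqrt_eq_rpow (2 * ((n : ℝ) + 1)), ← rpow_add hB]
  norm_num

lemma hermiteNorm_mul_two_mul (n : ℕ) :
    hermiteNorm n * (2 * n) = √(2 * n) * hermiteNorm (n - 1) := by
  cases n with
  | zero => simp
  | succ n =>
    have hsq : √(2 * ((n : ℝ) + 1)) ^ 2 = 2 * ((n : ℝ) + 1) := sq_sqrt (by positivity)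
    push_cast [Nat.add_sub_cancel]
    linear_combination
      √(2 * ((n : ℝ) + 1)) * hermiteNorm_succ_mul_sqrt n - hermiteNorm (n + 1) * hsq

lemma hasDerivAt_hermiteFn (n : ℕ) (x : ℝ) :
    HasDerivAt (hermiteFn n) (√(2 * n) * hermiteFn (n - 1) x - x * hermiteFn n x) x := by
  have hexp : HasDerivAt (fun x : ℝ => exp (-x ^ 2 / 2)) (-x * exp (-x ^ 2 / 2)) x := by
    refine (((hasDerivAt_pow 2 x).fun_neg).div_const 2).exp.congr_deriv ?_
    push_cast
    ring
  refine (((hasDerivAt_physHermite n x).const_mul (hermiteNorm n)).fun_mul hexp).congr_deriv ?_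
  rw [hermiteFn_eq, hermiteFn_eq]
  linear_combination physHermite (n - 1) x * exp (-x ^ 2 / 2) * hermiteNorm_mul_two_mul n

lemma sqrt_mul_hermiteFn_succ (n : ℕ) (x : ℝ) :
    √(2 * ((n : ℝ) + 1)) * hermiteFn (n + 1) x
      = 2 * x * hermiteFn n x - √(2 * n) * hermiteFn (n - 1) x := by
  rw [hermiteFn_eq, hermiteFn_eq, hermiteFn_eq, physHermite_succ]
  linear_combination
    (2 * x * physHermite n x - 2 * n * physHermite (n - 1) x) * exp (-x ^ 2 / 2) *
      hermiteNorm_succ_mul_sqrt n -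
    physHermite (n - 1) x * exp (-x ^ 2 / 2) * hermiteNorm_mul_two_mul n

lemma hasGaussianDecay_hermiteFn (n : ℕ) : HasGaussianDecay (hermiteFn n) :=
  HasGaussianDecay.of_isBigO_mul ((physHermite_isBigO_top n).const_mul_left (hermiteNorm n))
    ⟨0, (isBigO_refl _ _).congr_right fun _ => by simp⟩

/-- The derivative of `φₙ²` telescopes: it is `aₙ - aₙ₊₁` with `aₙ = √(2n) φₙ φₙ₋₁`. -/
lemma hasDerivAt_sum_range_hermiteFn_sq (N : ℕ) (x : ℝ) :
    HasDerivAt (fun x => ∑ n ∈ Finset.range N, hermiteFn n x ^ 2)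
      (-√(2 * N) * (hermiteFn N x * hermiteFn (N - 1) x)) x := by
  set a : ℕ → ℝ := fun n => √(2 * n) * (hermiteFn n x * hermiteFn (n - 1) x)
  have hterm : ∀ n, HasDerivAt (fun x => hermiteFn n x ^ 2) (a n - a (n + 1)) x := fun n => by
    refine ((hasDerivAt_hermiteFn n x).pow 2).congr_deriv ?_
    dsimp only [a]
    rw [Nat.add_sub_cancel]
    push_cast
    linear_combination hermiteFn n x * sqrt_mul_hermiteFn_succ n x
  refine (HasDerivAt.fun_sum fun n _ => hterm n).congr_deriv ?_
  rw [Finset.sum_range_sub']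
  simp [a]

theorem stmt8_general (N : ℕ) (m : ℝ) :
    (∫ x in Set.Ioi m, ∑ n ∈ Finset.range N, hermiteFn n x ^ 2) =
      Real.sqrt (2 * N) *
        ∫ z in Set.Ioi (0 : ℝ), z * hermiteFn N (m + z) * hermiteFn (N - 1) (m + z) := by
  have hdecay : HasGaussianDecay fun x => ∑ n ∈ Finset.range N, hermiteFn n x ^ 2 :=
    HasGaussianDecay.sum fun n _ => by
      simpa only [sq] using (hasGaussianDecay_hermiteFn n).mul (hasGaussianDecay_hermiteFn n)
  have hdecay' := ((hasGaussianDecay_hermiteFn N).mul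
    (hasGaussianDecay_hermiteFn (N - 1))).const_mul (-√(2 * N))
  rw [integral_Ioi_eq_neg_integral_Ioi_sub_const_mul_deriv m (hasDerivAt_sum_range_hermiteFn_sq N)
    hdecay hdecay', integral_Ioi_eq_integral_Ioi_zero_comp_add, ← integral_const_mul,
    ← integral_neg]
  congr with z
  ring

theorem stmt8 (N : ℕ) (hN : 1 ≤ N) (m : ℝ) :
    (∫ x in Set.Ioi m, ∑ n ∈ Finset.range N, hermiteFn n x ^ 2) =
      Real.sqrt (2 * N) *
        ∫ z in Set.Ioi (0 : ℝ), z * hermiteFn N (m + z) * hermiteFn (N - 1) (m + z) :=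
  stmt8_general N m
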